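/- arXiv:1802.00926 — 2 statements merged into one kernel-verified Lean document; each statement's English description precedes it below -/
import Mathlib

section
/- Let σ, σ' : [n] → [k] be labeling functions and C ≥ 1 a constant. Suppose every label class of σ has size at least n/(Ck), every label class of σ' has size at least n/(Ck), and min over permutations π of [k] of the Hamming error (1/n)·|{u : π(σ'(u)) ≠ σ(u)}| is strictly less than 1/(Ck). Define ξ : [k] → [k] by ξ(i) = argmax over t in [k] of |{u : σ(u) = t} ∩ {u : σ'(u) = i}|. Then ξ is a permutation of [k], and the Hamming error of ξ∘σ' against σ equals the minimum over all permutations π of the Hamming error of π∘σ' against σ. -/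
open Finset

/-- Consensus / majority-voting lemma (Lemma 4 of Gao et al. 2015).
If both labelings have all classes of size at least `n/(Ck)` and some permutation
aligns `σ'` to `σ` with Hamming error `< 1/(Ck)`, then any argmax-overlap map `ξ`
is a permutation and achieves the permutation-minimized Hamming error. -/
theorem stmt_1 (n k : ℕ) (hn : 0 < n) (hk : 0 < k)
    (σ σ' : Fin n → Fin k) (C : ℝ) (hC : 1 ≤ C)
    (hσ : ∀ t : Fin k, (n : ℝ) / (C * k) ≤ (univ.filter (fun u => σ u = t)).card)
    (hσ' : ∀ t : Fin k, (n : ℝ) / (C * k) ≤ (univ.filter (fun u => σ' u = t)).card)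
    (hclose : ∃ π : Equiv.Perm (Fin k),
      ((univ.filter (fun u => π (σ' u) ≠ σ u)).card : ℝ) / n < 1 / (C * k))
    (ξ : Fin k → Fin k)
    (hξ : ∀ i t : Fin k,
      (univ.filter (fun u => σ u = t ∧ σ' u = i)).card ≤
        (univ.filter (fun u => σ u = ξ i ∧ σ' u = i)).card) :
    Function.Bijective ξ ∧
      ∀ π : Equiv.Perm (Fin k),
        (univ.filter (fun u => ξ (σ' u) ≠ σ u)).card ≤
          (univ.filter (fun u => π (σ' u) ≠ σ u)).card := by
  obtain ⟨π, hπ⟩ := hclose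
  have hkR : (0:ℝ) < (k:ℝ) := by exact_mod_cast hk
  have hCk : (0:ℝ) < C * k := by positivity
  have hnR : (0:ℝ) < (n:ℝ) := by exact_mod_cast hn
  have hE : ((univ.filter (fun u => π (σ' u) ≠ σ u)).card : ℝ) < (n:ℝ) / (C * k) := by
    rw [div_lt_div_iff₀ hnR hCk] at hπ
    rw [lt_div_iff₀ hCk]
    linarith
  -- Main claim: ξ coincides with π
  have key : ∀ i, ξ i = π i := by
    intro i
    by_contra hne
    set Err := univ.filter (fun u => π (σ' u) ≠ σ u) with hErrdef
    set Ei := univ.filter (fun u => π (σ' u) ≠ σ u ∧ σ' u = i) with hEidef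
    have hsub1 : univ.filter (fun u => σ u = ξ i ∧ σ' u = i) ⊆ Ei := by
      intro u hu
      simp only [hEidef, mem_filter, mem_univ, true_and] at hu ⊢
      refine ⟨?_, hu.2⟩
      rw [hu.2, hu.1]
      exact fun h => hne h.symm
    have hsub2 : Ei ⊆ Err := by
      intro u hu
      simp only [hEidef, hErrdef, mem_filter, mem_univ, true_and] at hu ⊢
      exact hu.1
    have hsub3 : univ.filter (fun u => σ u = π i) ⊆
        (univ.filter (fun u => σ u = π i ∧ σ' u = i)) ∪ (Err \ Ei) := by
      intro u hu
      simp only [mem_filter, mem_univ, true_and] at hu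
      by_cases hi : σ' u = i
      · exact mem_union_left _ (by simp [mem_filter, hu, hi])
      · refine mem_union_right _ ?_
        simp only [hErrdef, hEidef, mem_sdiff, mem_filter, mem_univ, true_and]
        constructor
        · rw [hu]
          exact fun h => hi (π.injective h)
        · exact fun h => hi h.2
    have hc1 : (univ.filter (fun u => σ u = π i ∧ σ' u = i)).card ≤ Ei.card :=
      le_trans (hξ i (π i)) (card_le_card hsub1)
    have hc2 : (Err \ Ei).card = Err.card - Ei.card := card_sdiff_of_subset hsub2
    have hc3 : (univ.filter (fun u => σ u = π i)).card ≤ Err.card := by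
      have h4 := card_le_card hsub3
      have h5 := card_union_le (univ.filter (fun u => σ u = π i ∧ σ' u = i)) (Err \ Ei)
      have h6 := card_le_card hsub2
      omega
    have hcast : ((univ.filter (fun u => σ u = π i)).card : ℝ) ≤ (Err.card : ℝ) := by
      exact_mod_cast hc3
    have hcontra := lt_of_le_of_lt (le_trans (hσ (π i)) hcast) hE
    exact lt_irrefl _ hcontra
  have hξπ : ξ = ⇑π := funext key
  constructor
  · rw [hξπ]; exact π.bijective
  · -- optimality: pointwise argmax gives smallest error among all maps
    intro π'
    have hcount : ∀ f : Fin n → Fin k,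
        (univ.filter (fun u => f u = σ u)).card =
          ∑ i : Fin k, (univ.filter (fun u => f u = σ u ∧ σ' u = i)).card := by
      intro f
      rw [card_eq_sum_card_fiberwise (f := σ') (t := univ) (fun u _ => mem_univ _)]
      apply Finset.sum_congr rfl
      intro i _
      congr 1
      ext u
      simp [Finset.filter_filter]
    have hagree : ∀ g : Fin k → Fin k,
        (univ.filter (fun u => g (σ' u) = σ u)).card =
          ∑ i : Fin k, (univ.filter (fun u => σ u = g i ∧ σ' u = i)).card := by
      intro g
      rw [hcount (fun u => g (σ' u))]
      apply Finset.sum_congr rfl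
      intro i _
      congr 1
      ext u
      simp only [mem_filter, mem_univ, true_and]
      constructor
      · rintro ⟨h1, h2⟩
        exact ⟨by rw [← h1, h2], h2⟩
      · rintro ⟨h1, h2⟩
        exact ⟨by rw [h2, h1], h2⟩
    have hle : (univ.filter (fun u => π' (σ' u) = σ u)).card ≤
        (univ.filter (fun u => ξ (σ' u) = σ u)).card := by
      rw [hagree ⇑π', hagree ξ]
      exact Finset.sum_le_sum (fun i _ => hξ i (π' i))
    have hsplit : ∀ g : Fin k → Fin k,
        (univ.filter (fun u => g (σ' u) = σ u)).card +
          (univ.filter (fun u => ¬ g (σ' u) = σ u)).card = n := by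
      intro g
      rw [Finset.card_filter_add_card_filter_not]
      simp
    have h1 := hsplit ξ
    have h2 := hsplit ⇑π'
    simp only [ne_eq]
    omega
end

section
/- Let A₁, …, A_k and B₁, …, B_k be two families of pairwise disjoint subsets of [n], with ∪A_i and ∪B_i not necessarily covering [n]. Suppose each B_j intersects at most one A_i, each |A_i| > n/(2k), each B_j was chosen greedily as a largest admissible cluster, and ∑_i |A_i| > n − n/(2k). Then there exists a permutation π of [k] such that B_i ∩ A_{π(i)} ≠ ∅ and |B_i| ≥ |A_{π(i)}| for every i ∈ [k]. -/
/-!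
Send each core `A m` to the first cluster `B i` that meets it. All earlier clusters miss `A m`,
so the greedy property gives `|A m| ≤ |B i|`, and since a cluster meets at most one core, this map
is injective on the cores that are met at all. If some core `A j` were met by no cluster, a
cluster `B i₀` outside the image would still satisfy `|A j| ≤ |B i₀|`, so the clusters would
outweigh the met cores plus `A j`. Packing the clusters and the unmet cores disjointly into `[n]`
then yields `∑ |A m| + |A j| ≤ n`, contradicting `|A j| > n/(2k)` and `∑ |A m| > n - n/(2k)`.
Hence every core is met, the first-meeting map is a permutation, and its inverse is `π`.
-/

open Finset Function

section FirstMeeting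

variable {α ι : Type*} [LinearOrder ι] [WellFoundedLT ι] (A B : ι → Finset α)

open Classical in
/-- The least `i` such that `B i` meets `A m`; junk value `m` if there is none. -/
noncomputable def firstMeeting (m : ι) : ι :=
  if h : ∃ i, ¬Disjoint (A m) (B i) then wellFounded_lt.min {i | ¬Disjoint (A m) (B i)} h else m

variable {A B}

theorem not_disjoint_firstMeeting {m : ι} (h : ∃ i, ¬Disjoint (A m) (B i)) :
    ¬Disjoint (A m) (B (firstMeeting A B m)) := by
  rw [firstMeeting, dif_pos h]
  exact wellFounded_lt.min_mem {i | ¬Disjoint (A m) (B i)} h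

theorem disjoint_of_lt_firstMeeting {m i : ι} (hi : i < firstMeeting A B m) :
    Disjoint (A m) (B i) := by
  by_contra hmeet
  have h : ∃ i, ¬Disjoint (A m) (B i) := ⟨i, hmeet⟩
  rw [firstMeeting, dif_pos h] at hi
  exact wellFounded_lt.not_lt_min {i | ¬Disjoint (A m) (B i)} hmeet hi

theorem injOn_firstMeeting
    (hone : ∀ i m m', ¬Disjoint (A m) (B i) → ¬Disjoint (A m') (B i) → m = m') :
    Set.InjOn (firstMeeting A B) {m | ∃ i, ¬Disjoint (A m) (B i)} := fun m hm m' hm' heq =>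
  hone _ m m' (not_disjoint_firstMeeting hm) (heq ▸ not_disjoint_firstMeeting hm')

end FirstMeeting

theorem sum_card_add_sum_card_le_card {α ι κ : Type*} [Fintype α] [DecidableEq α] [Fintype ι]
    {A : κ → Finset α} {B : ι → Finset α} (hB : Pairwise (Disjoint on B)) {U : Finset κ}
    (hA : (U : Set κ).PairwiseDisjoint A) (hAB : ∀ m ∈ U, ∀ i, Disjoint (A m) (B i)) :
    ∑ i, #(B i) + ∑ m ∈ U, #(A m) ≤ Fintype.card α := by
  have hdisj : Disjoint (univ.biUnion B) (U.biUnion A) := by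
    simp only [disjoint_biUnion_left, disjoint_biUnion_right]
    exact fun m hm i _ => (hAB m hm i).symm
  calc ∑ i, #(B i) + ∑ m ∈ U, #(A m) = #(univ.biUnion B ∪ U.biUnion A) := by
        rw [card_union_of_disjoint hdisj, card_biUnion (fun i _ j _ hij => hB hij),
          card_biUnion hA]
    _ ≤ Fintype.card α := card_le_univ _

theorem sum_card_add_card_le_card_of_forall_disjoint {α ι : Type*} [Fintype α] [DecidableEq α]
    [Fintype ι] [LinearOrder ι] {A B : ι → Finset α}
    (hA : Pairwise (Disjoint on A)) (hB : Pairwise (Disjoint on B))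
    (hone : ∀ i m m', ¬Disjoint (A m) (B i) → ¬Disjoint (A m') (B i) → m = m')
    (hgreedy : ∀ i m, (∀ i' < i, Disjoint (A m) (B i')) → #(A m) ≤ #(B i))
    {j : ι} (hj : ∀ i, Disjoint (A j) (B i)) :
    ∑ m, #(A m) + #(A j) ≤ Fintype.card α := by
  classical
  set T := univ.filter fun m => ∃ i, ¬Disjoint (A m) (B i)
  have hinj : Set.InjOn (firstMeeting A B) T := fun m hm m' hm' =>
    injOn_firstMeeting hone (mem_filter.mp hm).2 (mem_filter.mp hm').2
  have hjT : j ∉ T := by simpa [T] using hj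
  obtain ⟨i₀, hi₀⟩ : ∃ i₀, i₀ ∉ T.image (firstMeeting A B) := by
    by_contra! hall
    have hcard : #T = #(univ : Finset ι) := by
      rw [← card_image_of_injOn hinj, eq_univ_of_forall hall]
    exact hjT (eq_univ_of_card T hcard ▸ mem_univ j)
  have hmet : ∑ m ∈ T, #(A m) ≤ ∑ i ∈ T.image (firstMeeting A B), #(B i) := by
    rw [sum_image hinj]
    exact sum_le_sum fun m _ => hgreedy _ m fun _ => disjoint_of_lt_firstMeeting
  have hclusters : ∑ i ∈ T.image (firstMeeting A B), #(B i) + #(B i₀) ≤ ∑ i, #(B i) := by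
    rw [add_comm, ← sum_insert (f := fun i => #(B i)) hi₀]
    exact sum_le_sum_of_subset (subset_univ _)
  have hunmet : ∑ i, #(B i) + ∑ m ∈ Tᶜ, #(A m) ≤ Fintype.card α :=
    sum_card_add_sum_card_le_card hB (hA.set_pairwise _) fun m hm => by
      simpa [T] using mem_compl.mp hm
  have hsplit := sum_add_sum_compl T fun m => #(A m)
  have hj_le := hgreedy i₀ j fun i' _ => hj i'
  omega

theorem stmt_11_general (n k : ℕ) (A B : Fin k → Finset (Fin n))
    (hA : ∀ i j, i ≠ j → Disjoint (A i) (A j))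
    (hB : ∀ i j, i ≠ j → Disjoint (B i) (B j))
    (hone : ∀ j i i', (B j ∩ A i).Nonempty → (B j ∩ A i').Nonempty → i = i')
    (hbig : ∀ i, (n : ℝ) / (2 * k) < (A i).card)
    (hgreedy : ∀ i j : Fin k, (∀ i' : Fin k, i' < i → Disjoint (A j) (B i')) →
      (A j).card ≤ (B i).card)
    (hcover : (n : ℝ) - (n : ℝ) / (2 * k) < ∑ i, ((A i).card : ℝ)) :
    ∃ π : Equiv.Perm (Fin k), ∀ i,
      (B i ∩ A (π i)).Nonempty ∧ (A (π i)).card ≤ (B i).card := by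
  have hone' : ∀ i m m', ¬Disjoint (A m) (B i) → ¬Disjoint (A m') (B i) → m = m' := by
    simp only [disjoint_comm (a := A _), not_disjoint_iff_nonempty_inter]
    exact hone
  have hmet : ∀ m, ∃ i, ¬Disjoint (A m) (B i) := by
    by_contra! ⟨j, hj⟩
    have hle := sum_card_add_card_le_card_of_forall_disjoint (fun i j => hA i j)
      (fun i j => hB i j) hone' hgreedy hj
    rw [Fintype.card_fin] at hle
    have hle' : ∑ m, ((A m).card : ℝ) + (A j).card ≤ n := by exact_mod_cast hle
    linarith [hbig j]
  have hbij : Bijective (firstMeeting A B) := Finite.injective_iff_bijective.mp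
    fun m m' => injOn_firstMeeting hone' (hmet m) (hmet m')
  refine ⟨(Equiv.ofBijective _ hbij).symm, fun i => ?_⟩
  obtain ⟨m, rfl⟩ := hbij.surjective i
  rw [Equiv.ofBijective_symm_apply_apply, ← not_disjoint_iff_nonempty_inter, disjoint_comm]
  exact ⟨not_disjoint_firstMeeting (hmet m), hgreedy _ _ fun _ => disjoint_of_lt_firstMeeting⟩

/-- Claim (66): abstract greedy matching. If the cores `A i` are large, disjoint
and cover all but fewer than `n/(2k)` points, the clusters `B i` are disjoint,
each `B j` meets at most one core, and the greedy property holds (if a core is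
untouched by the first `i` clusters then `B i` is at least as large as it),
then some permutation `π` matches every `B i` to a core `A (π i)` it intersects,
with `|B i| ≥ |A (π i)|`. -/
theorem stmt_11 (n k : ℕ) (hk : 0 < k) (A B : Fin k → Finset (Fin n))
    (hA : ∀ i j, i ≠ j → Disjoint (A i) (A j))
    (hB : ∀ i j, i ≠ j → Disjoint (B i) (B j))
    (hone : ∀ j i i', (B j ∩ A i).Nonempty → (B j ∩ A i').Nonempty → i = i')
    (hbig : ∀ i, (n : ℝ) / (2 * k) < (A i).card)
    (hgreedy : ∀ i j : Fin k, (∀ i' : Fin k, i' < i → Disjoint (A j) (B i')) →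
      (A j).card ≤ (B i).card)
    (hcover : (n : ℝ) - (n : ℝ) / (2 * k) < ∑ i, ((A i).card : ℝ)) :
    ∃ π : Equiv.Perm (Fin k), ∀ i,
      (B i ∩ A (π i)).Nonempty ∧ (A (π i)).card ≤ (B i).card :=
  stmt_11_general n k A B hA hB hone hbig hgreedy hcover
end
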